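/- Let 𝒯 be the set of all (2,4)-types T such that G(T) ⊆ G(T₀) for at least one of the four types T₀ ∈ {({1̄,2̄,3̄,4̄},{1̄}), ({2̄,3̄,4̄},{1̄,2̄}), ({3̄,4̄},{1̄,2̄,3̄}), ({4̄},{1̄,2̄,3̄,4̄})}. Then 𝒯 is a generic (2,4)-tropical oriented matroid, the types T = ({2̄,4̄},{1̄}) and T' = ({4̄},{1̄,3̄}) belong to 𝒯, and removing all occurrences of 2̄ from the coordinates of T yields the same pair of sets as removing all occurrences of 3̄ from the coordinates of T' (namely ({4̄},{1̄})); nevertheless, the coordinatewise union T ∪ T' = ({2̄,4̄},{1̄,3̄}) is not a type of 𝒯. (This disproves Lemma 3.16 of Oh–Yoo.) -/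

import Mathlib

/-! The four generators `tA, tB, tC, tD` form a staircase: the first coordinate shrinks from
`{1̄,…,4̄}` to `{4̄}` while the second grows from `{1̄}` to `{1̄,…,4̄}`, and in each generator the second
coordinate lies weakly below the first. Each generator graph is a tree, so every refinement is
acyclic. Sortedness excludes a swap `(1, j̄), (2, j̄')` against `(1, j̄'), (2, j̄)`, the only way two
perfect matchings on two left vertices can differ, which gives compatibility. Since each coordinate
runs through a chain of sets, the union of the `i`-th coordinates of two refinements fits under one
of their two generators, which gives elimination. On the other hand `({2̄,4̄},{1̄,3̄})` needs `2̄` in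
the first coordinate (generator `tA` or `tB`) and `3̄` in the second (generator `tC` or `tD`). -/

open Finset

/-- A bipartite graph between `α` and `β`, identified with its edge set. -/
abbrev BGraph (α β : Type*) := Finset (α × β)

section BipartiteDefs

variable {α β : Type*} [DecidableEq α] [DecidableEq β]

/-- Left degree vector. -/
def LD (G : BGraph α β) (a : α) : ℕ := (G.filter fun e => e.1 = a).card

/-- Right degree vector. -/
def RD (G : BGraph α β) (b : β) : ℕ := (G.filter fun e => e.2 = b).card

/-- The simple graph on `α ⊕ β` associated to a bipartite edge set. -/
def toGraph (G : BGraph α β) : SimpleGraph (α ⊕ β) :=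
  SimpleGraph.fromRel fun x y => ∃ a b, x = Sum.inl a ∧ y = Sum.inr b ∧ (a, b) ∈ G

/-- Acyclicity of a bipartite edge set. -/
def Acyclic (G : BGraph α β) : Prop := (toGraph G).IsAcyclic

/-- `U` is a tree on the vertex set `I ⊔ J`. -/
def IsTreeOn (U : BGraph α β) (I : Finset α) (J : Finset β) : Prop :=
  (∀ e ∈ U, e.1 ∈ I ∧ e.2 ∈ J) ∧ Acyclic U ∧
    ∀ x y : α ⊕ β, Sum.elim (· ∈ I) (· ∈ J) x → Sum.elim (· ∈ I) (· ∈ J) y →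
      (toGraph U).Reachable x y

/-- `M` is a perfect matching between `I` and `J`. -/
def IsMatching (M : BGraph α β) (I : Finset α) (J : Finset β) : Prop :=
  (∀ e ∈ M, e.1 ∈ I ∧ e.2 ∈ J) ∧ (∀ a ∈ I, ∃! b : β, (a, b) ∈ M) ∧
    ∀ b ∈ J, ∃! a : α, (a, b) ∈ M

/-- Compatibility of two bipartite graphs. -/
def Compatible (G G' : BGraph α β) : Prop :=
  ∀ (I : Finset α) (J : Finset β) (M M' : BGraph α β),
    M ⊆ G → M' ⊆ G' → IsMatching M I J → IsMatching M' I J → M = M'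

end BipartiteDefs

/-- The graph of an `(n,d)`-(semi)type. -/
def typeGraph {n d : ℕ} (T : Fin n → Finset (Fin d)) : BGraph (Fin n) (Fin d) :=
  Finset.univ.filter fun e => e.2 ∈ T e.1

/-- A generic `(n,d)`-tropical oriented matroid. -/
structure GenericTOM (n d : ℕ) where
  types : Set (Fin n → Finset (Fin d))
  nonempty_coords : ∀ T ∈ types, ∀ i, (T i).Nonempty
  acyclic : ∀ T ∈ types, Acyclic (typeGraph T)
  boundary : ∀ j : Fin d, (fun _ => ({j} : Finset (Fin d))) ∈ types
  surrounding : ∀ T ∈ types, ∀ T' : Fin n → Finset (Fin d),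
    (∀ i, (T' i).Nonempty) → typeGraph T' ⊆ typeGraph T → T' ∈ types
  compat : ∀ T ∈ types, ∀ T' ∈ types, Compatible (typeGraph T) (typeGraph T')
  elimination : ∀ U ∈ types, ∀ V ∈ types, ∀ i : Fin n, ∃ W ∈ types,
    W i = U i ∪ V i ∧ ∀ i' : Fin n, i' ≠ i → W i' = U i' ∨ W i' = V i'

def tA : Fin 2 → Finset (Fin 4) := ![{0, 1, 2, 3}, {0}]
def tB : Fin 2 → Finset (Fin 4) := ![{1, 2, 3}, {0, 1}]
def tC : Fin 2 → Finset (Fin 4) := ![{2, 3}, {0, 1, 2}]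
def tD : Fin 2 → Finset (Fin 4) := ![{3}, {0, 1, 2, 3}]

/-- The set of all `(2,4)`-types refining one of the four tree-types. -/
def calT : Set (Fin 2 → Finset (Fin 4)) :=
  {T | (∀ i, (T i).Nonempty) ∧
    (typeGraph T ⊆ typeGraph tA ∨ typeGraph T ⊆ typeGraph tB ∨
      typeGraph T ⊆ typeGraph tC ∨ typeGraph T ⊆ typeGraph tD)}

def tX : Fin 2 → Finset (Fin 4) := ![{1, 3}, {0}]
def tY : Fin 2 → Finset (Fin 4) := ![{3}, {0, 2}]

section Bipartite

variable {α β : Type*}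

instance [DecidableEq α] [DecidableEq β] [Fintype α] [Fintype β] (G : BGraph α β) :
    DecidableRel (toGraph G).Adj := fun x y =>
  decidable_of_iff _ (SimpleGraph.fromRel_adj _ x y).symm

theorem toGraph_mono [DecidableEq α] [DecidableEq β] {G G' : BGraph α β} (h : G ⊆ G') :
    toGraph G ≤ toGraph G' := by
  have edge : ∀ x y : α ⊕ β, (∃ a b, x = .inl a ∧ y = .inr b ∧ (a, b) ∈ G) →
      ∃ a b, x = .inl a ∧ y = .inr b ∧ (a, b) ∈ G' :=
    fun _ _ ⟨a, b, hx, hy, hab⟩ => ⟨a, b, hx, hy, h hab⟩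
  exact fun x y ⟨hne, hxy⟩ => ⟨hne, hxy.imp (edge x y) (edge y x)⟩

theorem Acyclic.anti [DecidableEq α] [DecidableEq β] {G G' : BGraph α β} (h : G ⊆ G')
    (h' : Acyclic G') : Acyclic G :=
  SimpleGraph.IsAcyclic.anti (toGraph_mono h) h'

theorem Compatible.anti {G G' H H' : BGraph α β} (hH : H ⊆ G) (hH' : H' ⊆ G')
    (hc : Compatible G G') : Compatible H H' :=
  fun I J M M' hM hM' => hc I J M M' (hM.trans hH) (hM'.trans hH')

theorem IsMatching.eq_of_subset {M M' : BGraph α β} {I : Finset α} {J : Finset β}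
    (hM : IsMatching M I J) (hM' : IsMatching M' I J) (h : M ⊆ M') : M = M' := by
  refine h.antisymm fun ⟨a, b⟩ hab => ?_
  obtain ⟨b₀, hb₀, -⟩ := hM.2.1 a (hM'.1 _ hab).1
  obtain ⟨b₁, -, hb₁⟩ := hM'.2.1 a (hM'.1 _ hab).1
  rwa [hb₁ b hab, ← hb₁ b₀ (h hb₀)]

end Bipartite

/-- With only two left vertices, two perfect matchings on the same vertex sets that differ must
differ by a swap. -/
theorem compatible_of_forall_swap {β : Type*} [DecidableEq β] {G G' : BGraph (Fin 2) β}
    (h : ∀ a a' j j', a ≠ a' → (a, j) ∈ G → (a', j') ∈ G → (a, j') ∈ G' → (a', j) ∈ G' → j = j') :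
    Compatible G G' := by
  intro I J M M' hMG hMG' hM hM'
  refine hM.eq_of_subset hM' fun ⟨a, b⟩ hab => ?_
  obtain ⟨haI, hbJ⟩ := hM.1 _ hab
  obtain ⟨b', hb', hb'_uniq⟩ := hM'.2.1 a haI
  obtain ⟨a', ha', -⟩ := hM'.2.2 b hbJ
  obtain ⟨a'', ha'', -⟩ := hM.2.2 b' (hM'.1 _ hb').2
  obtain ⟨b₀, -, hb₀_uniq⟩ := hM.2.1 a haI
  by_contra hb
  have hbb' : b ≠ b' := fun e => hb (e ▸ hb')
  have haa' : a ≠ a' := fun e => hbb' (hb'_uniq b (e ▸ ha'))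
  have haa'' : a ≠ a'' := fun e => hbb' ((hb₀_uniq b hab).trans (hb₀_uniq b' (e ▸ ha'')).symm)
  have ha'a'' : a'' = a' := by omega
  exact hbb' (h a a' b b' haa' (hMG hab) (hMG (ha'a'' ▸ ha'')) (hMG' hb') (hMG' ha'))

theorem mem_typeGraph {n d : ℕ} {T : Fin n → Finset (Fin d)} {i : Fin n} {j : Fin d} :
    (i, j) ∈ typeGraph T ↔ j ∈ T i := by
  simp [typeGraph]

theorem typeGraph_subset_typeGraph {n d : ℕ} {T S : Fin n → Finset (Fin d)} :
    typeGraph T ⊆ typeGraph S ↔ ∀ i, T i ⊆ S i :=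
  ⟨fun h _ _ hj => mem_typeGraph.1 (h (mem_typeGraph.2 hj)),
    fun h ⟨i, _⟩ he => mem_typeGraph.2 (h i (mem_typeGraph.1 he))⟩

theorem compatible_typeGraph_of_sorted {d : ℕ} {T T' : Fin 2 → Finset (Fin d)}
    (hT : ∀ j ∈ T 1, ∀ j' ∈ T 0, j ≤ j') (hT' : ∀ j ∈ T' 1, ∀ j' ∈ T' 0, j ≤ j') :
    Compatible (typeGraph T) (typeGraph T') := by
  refine compatible_of_forall_swap fun a a' j j' haa' h₁ h₂ h₃ h₄ => ?_
  simp only [mem_typeGraph] at h₁ h₂ h₃ h₄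
  fin_cases a <;> fin_cases a' <;> first
    | exact absurd rfl haa'
    | exact le_antisymm (hT' _ h₄ _ h₃) (hT _ h₂ _ h₁)
    | exact le_antisymm (hT _ h₁ _ h₂) (hT' _ h₃ _ h₄)

section Refinements

variable {ι : Type*} {n d : ℕ}

def refinements (S : ι → Fin n → Finset (Fin d)) : Set (Fin n → Finset (Fin d)) :=
  {T | (∀ i, (T i).Nonempty) ∧ ∃ k, ∀ i, T i ⊆ S k i}

variable {S : ι → Fin n → Finset (Fin d)}

theorem update_union_mem_refinements {U V : Fin n → Finset (Fin d)} {k : ι} {i : Fin n}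
    (hU : ∀ i, (U i).Nonempty) (hUk : ∀ i, U i ⊆ S k i) (hVk : V i ⊆ S k i) :
    Function.update U i (U i ∪ V i) ∈ refinements S := by
  refine ⟨fun i' => ?_, k, fun i' => ?_⟩ <;> rcases eq_or_ne i' i with rfl | hi'
  · simpa using (hU i').mono subset_union_left
  · simpa [hi'] using hU i'
  · simpa using union_subset (hUk i') hVk
  · simpa [hi'] using hUk i'

theorem refinements_elimination (hchain : ∀ i k k', S k i ⊆ S k' i ∨ S k' i ⊆ S k i)
    {U V : Fin n → Finset (Fin d)} (hU : U ∈ refinements S) (hV : V ∈ refinements S) (i : Fin n) :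
    ∃ W ∈ refinements S, W i = U i ∪ V i ∧ ∀ i', i' ≠ i → W i' = U i' ∨ W i' = V i' := by
  obtain ⟨hUne, kU, hUk⟩ := hU
  obtain ⟨hVne, kV, hVk⟩ := hV
  rcases hchain i kV kU with hle | hle
  · exact ⟨_, update_union_mem_refinements hUne hUk ((hVk i).trans hle), by simp,
      fun i' hi' => Or.inl (by simp [hi'])⟩
  · exact ⟨_, update_union_mem_refinements hVne hVk ((hUk i).trans hle), by simp [union_comm],
      fun i' hi' => Or.inr (by simp [hi'])⟩

def GenericTOM.ofRefinements (S : ι → Fin n → Finset (Fin d))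
    (hacyclic : ∀ k, Acyclic (typeGraph (S k)))
    (hcompat : ∀ k k', Compatible (typeGraph (S k)) (typeGraph (S k')))
    (hboundary : ∀ j, ∃ k, ∀ i, j ∈ S k i)
    (hchain : ∀ i k k', S k i ⊆ S k' i ∨ S k' i ⊆ S k i) : GenericTOM n d where
  types := refinements S
  nonempty_coords _ hT := hT.1
  acyclic _ := fun ⟨_, k, hk⟩ => (hacyclic k).anti (typeGraph_subset_typeGraph.2 hk)
  boundary j :=
    ⟨fun _ => singleton_nonempty j, (hboundary j).imp fun _ hk i => singleton_subset_iff.2 (hk i)⟩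
  surrounding _ := fun ⟨_, k, hk⟩ _ hne hsub =>
    ⟨hne, k, fun i => (typeGraph_subset_typeGraph.1 hsub i).trans (hk i)⟩
  compat _ := fun ⟨_, k, hk⟩ _ ⟨_, k', hk'⟩ =>
    (hcompat k k').anti (typeGraph_subset_typeGraph.2 hk) (typeGraph_subset_typeGraph.2 hk')
  elimination _ hU _ hV := refinements_elimination hchain hU hV

end Refinements

def staircase : Fin 4 → Fin 2 → Finset (Fin 4) := ![tA, tB, tC, tD]

theorem calT_eq_refinements : calT = refinements staircase := by
  ext T
  simp [calT, refinements, typeGraph_subset_typeGraph, Fin.exists_fin_succ, staircase]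

set_option maxHeartbeats 2000000 in
theorem acyclic_staircase (k : Fin 4) : Acyclic (typeGraph (staircase k)) := by
  rw [Acyclic, SimpleGraph.isAcyclic_iff_forall_adj_isBridge]
  simp only [SimpleGraph.isBridge_iff]
  revert k
  decide

theorem statement18 :
    (∃ 𝓜 : GenericTOM 2 4, 𝓜.types = calT) ∧
    tX ∈ calT ∧ tY ∈ calT ∧
    (∀ i, (tX i).erase 1 = (tY i).erase 2) ∧
    (tX 0).erase 1 = ({3} : Finset (Fin 4)) ∧
    (tX 1).erase 1 = ({0} : Finset (Fin 4)) ∧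
    (fun i => tX i ∪ tY i) ∉ calT := by
  have hsorted : ∀ k, ∀ j ∈ staircase k 1, ∀ j' ∈ staircase k 0, j ≤ j' := by decide
  refine ⟨⟨GenericTOM.ofRefinements staircase acyclic_staircase
    (fun k k' => compatible_typeGraph_of_sorted (hsorted k) (hsorted k')) (by decide) (by decide),
    calT_eq_refinements.symm⟩, ?_⟩
  rw [calT_eq_refinements]
  unfold refinements
  decide
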